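/- arXiv:1608.05707 — 4 statements merged into one kernel-verified Lean document; each statement's English description precedes it below -/
import Mathlib

section
/- Let H be a complex Hilbert space, A ∈ L(H) coercive, and for x ∈ H let u be the unique solution in W^{2,2}((0,∞);H) of u'' = Au with u(0) = x. Define Dx := -u'(0). Then D is accretive: Re⟨Dx,x⟩ ≥ 0 for all x ∈ H. -/
open MeasureTheory Set Filter

noncomputable section

/-- `IsW22Sol A x u u' u''` says: `u ∈ W^{2,2}((0,∞);H)` (via its `C¹([0,∞);H)`
representative, with first derivative `u'` and second derivative `u''`, all
square-integrable on `(0,∞)`), `u(0) = x` and `u''(t) = A u(t)` on `(0,∞)`. -/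
def IsW22Sol {H : Type*} [NormedAddCommGroup H] [InnerProductSpace ℂ H]
    (A : H →L[ℂ] H) (x : H) (u u' u'' : ℝ → H) : Prop :=
  ContinuousOn u (Ici 0) ∧ ContinuousOn u' (Ici 0) ∧
  (∀ t ∈ Ioi (0:ℝ), HasDerivAt u (u' t) t) ∧
  (∀ t ∈ Ioi (0:ℝ), HasDerivAt u' (u'' t) t) ∧
  MemLp u 2 (volume.restrict (Ioi 0)) ∧
  MemLp u' 2 (volume.restrict (Ioi 0)) ∧
  MemLp u'' 2 (volume.restrict (Ioi 0)) ∧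
  u 0 = x ∧ (∀ t ∈ Ioi (0:ℝ), u'' t = A (u t))

/-!
The function `φ t = Re ⟪u' t, u t⟫` has derivative `‖u' t‖² + Re ⟪A (u t), u t⟫ ≥ 0`, so it is
nondecreasing on `[0, ∞)`. Since `u` and `u'` are square integrable, `φ` is integrable on `(0, ∞)`,
and an integrable function bounded below by the constant `φ 0` forces `φ 0 ≤ 0`. Hence
`Re ⟪D x, x⟫ = -φ 0 ≥ 0`.
-/

theorem nonpos_of_le_of_integrableOn_Ioi {f : ℝ → ℝ} {a c : ℝ}
    (hf : IntegrableOn f (Ioi a)) (hc : ∀ t ∈ Ioi a, c ≤ f t) : c ≤ 0 := by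
  by_contra! hc0
  have hconst : IntegrableOn (fun _ ↦ c) (Ioi a) := by
    refine hf.mono' aestronglyMeasurable_const ?_
    filter_upwards [ae_restrict_mem measurableSet_Ioi] with t ht
    rw [Real.norm_of_nonneg hc0.le]
    exact hc t ht
  simp [integrableOn_const_iff, hc0.ne'] at hconst

open scoped InnerProductSpace

section

variable {𝕜 E : Type*} [RCLike 𝕜] [NormedAddCommGroup E] [InnerProductSpace 𝕜 E]

theorem MeasureTheory.MemLp.integrable_inner {α : Type*} [MeasurableSpace α] {μ : Measure α}
    {f g : α → E} (hf : MemLp f 2 μ) (hg : MemLp g 2 μ) : Integrable (fun x ↦ ⟪f x, g x⟫_𝕜) μ :=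
  (L2.integrable_inner (hf.toLp f) (hg.toLp g)).congr <| by
    filter_upwards [hf.coeFn_toLp, hg.coeFn_toLp] with x hfx hgx
    rw [hfx, hgx]

variable [NormedSpace ℝ E]

theorem HasDerivAt.re_inner {f g : ℝ → E} {f' g' : E} {t : ℝ}
    (hf : HasDerivAt f f' t) (hg : HasDerivAt g g' t) :
    HasDerivAt (fun s ↦ RCLike.re ⟪f s, g s⟫_𝕜)
      (RCLike.re ⟪f t, g'⟫_𝕜 + RCLike.re ⟪f', g t⟫_𝕜) t := by
  have h := RCLike.reCLM.hasFDerivAt.comp_hasDerivAt t (hf.inner 𝕜 hg)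
  rw [map_add] at h
  exact h

theorem monotoneOn_re_inner_deriv_self {u u' u'' : ℝ → E} {a : ℝ}
    (hu : ContinuousOn u (Ici a)) (hu' : ContinuousOn u' (Ici a))
    (hd : ∀ t ∈ Ioi a, HasDerivAt u (u' t) t) (hd' : ∀ t ∈ Ioi a, HasDerivAt u' (u'' t) t)
    (hpos : ∀ t ∈ Ioi a, 0 ≤ RCLike.re ⟪u'' t, u t⟫_𝕜) :
    MonotoneOn (fun t ↦ RCLike.re ⟪u' t, u t⟫_𝕜) (Ici a) := by
  refine monotoneOn_of_hasDerivWithinAt_nonneg (convex_Ici a)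
    (f' := fun t ↦ RCLike.re ⟪u' t, u' t⟫_𝕜 + RCLike.re ⟪u'' t, u t⟫_𝕜)
    (RCLike.continuous_re.comp_continuousOn (hu'.inner hu)) (fun t ht ↦ ?_) fun t ht ↦ ?_
  · rw [interior_Ici] at ht
    exact ((hd' t ht).re_inner (hd t ht)).hasDerivWithinAt
  · rw [interior_Ici] at ht
    exact add_nonneg inner_self_nonneg (hpos t ht)

theorem re_inner_deriv_self_nonpos {u u' u'' : ℝ → E} {a : ℝ}
    (hu : ContinuousOn u (Ici a)) (hu' : ContinuousOn u' (Ici a))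
    (hd : ∀ t ∈ Ioi a, HasDerivAt u (u' t) t) (hd' : ∀ t ∈ Ioi a, HasDerivAt u' (u'' t) t)
    (hpos : ∀ t ∈ Ioi a, 0 ≤ RCLike.re ⟪u'' t, u t⟫_𝕜)
    (hL2 : MemLp u 2 (volume.restrict (Ioi a))) (hL2' : MemLp u' 2 (volume.restrict (Ioi a))) :
    RCLike.re ⟪u' a, u a⟫_𝕜 ≤ 0 :=
  nonpos_of_le_of_integrableOn_Ioi (hL2'.integrable_inner hL2).re fun _ ht ↦
    monotoneOn_re_inner_deriv_self hu hu' hd hd' hpos self_mem_Ici (Ioi_subset_Ici_self ht) ht.le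

end

theorem dirichlet_to_neumann_accretive_general
    {H : Type*} [NormedAddCommGroup H] [InnerProductSpace ℂ H]
    (A : H →L[ℂ] H) (α : ℝ) (hα0 : 0 < α)
    (hA : ∀ y : H, α * ‖y‖ ^ 2 ≤ (inner ℂ (A y) y : ℂ).re)
    (x : H) (u u' u'' : ℝ → H) (hu : IsW22Sol A x u u' u'') :
    0 ≤ (inner ℂ (-(u' 0)) x : ℂ).re := by
  obtain ⟨hu, hu', hd, hd', hL2, hL2', -, rfl, hAu⟩ := hu
  have hpos : ∀ t ∈ Ioi (0 : ℝ), 0 ≤ RCLike.re ⟪u'' t, u t⟫_ℂ := fun t ht ↦ by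
    rw [hAu t ht]
    exact (mul_nonneg hα0.le (sq_nonneg _)).trans (hA _)
  have hφ := re_inner_deriv_self_nonpos hu hu' hd hd' hpos hL2 hL2'
  rw [inner_neg_left, Complex.neg_re]
  exact neg_nonneg.mpr hφ

/-- the Dirichlet-to-Neumann operator `D x = -u'(0)` (where `u`
solves `u'' = A u`, `u(0) = x` in `W^{2,2}((0,∞);H)`) is accretive:
`Re ⟨D x, x⟩ ≥ 0`. -/
theorem dirichlet_to_neumann_accretive
    {H : Type*} [NormedAddCommGroup H] [InnerProductSpace ℂ H] [CompleteSpace H]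
    (A : H →L[ℂ] H) (α : ℝ) (hα0 : 0 < α) (hα1 : α ≤ 1)
    (hA : ∀ y : H, α * ‖y‖ ^ 2 ≤ (inner ℂ (A y) y : ℂ).re)
    (x : H) (u u' u'' : ℝ → H) (hu : IsW22Sol A x u u' u'') :
    0 ≤ (inner ℂ (-(u' 0)) x : ℂ).re :=
  dirichlet_to_neumann_accretive_general A α hα0 hA x u u' u'' hu
end
end

section
/- Let H be a complex Hilbert space, A ∈ L(H) coercive, and D the Dirichlet-to-Neumann operator defined by Dx = -u'(0) where u ∈ W^{2,2}((0,∞);H) is the unique solution of u'' = Au, u(0) = x. Then D² = A. -/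
/-!
Differentiating `u'' = A u` shows that `v = -u'` solves `v'' = A v` with `v(0) = D x`. By
uniqueness `v` is the solution for the datum `D x`, so `D (D x) = -v'(0) = u''(0) = A u(0) = A x`.
-/

open MeasureTheory Set Filter

noncomputable section

namespace IsW22Sol

variable {H : Type*} [NormedAddCommGroup H] [InnerProductSpace ℂ H]
  {A : H →L[ℂ] H} {x : H} {u u' u'' : ℝ → H}

theorem initial (h : IsW22Sol A x u u' u'') : u 0 = x := h.2.2.2.2.2.2.2.1

theorem neg_deriv (h : IsW22Sol A x u u' u'') :
    IsW22Sol A (-u' 0) (fun t ↦ -u' t) (fun t ↦ -A (u t)) (fun t ↦ -A (u' t)) := by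
  obtain ⟨hu, hu', hu_deriv, hu'_deriv, hu_L2, hu'_L2, -, -, heq⟩ := h
  refine ⟨hu'.neg, (A.continuous.comp_continuousOn hu).neg, fun t ht ↦ ?_, fun t ht ↦ ?_,
    hu'_L2.neg, (A.comp_memLp' hu_L2).neg, (A.comp_memLp' hu'_L2).neg, rfl,
    fun _ _ ↦ (map_neg A _).symm⟩
  · exact (heq t ht ▸ hu'_deriv t ht).neg
  · exact ((A.restrictScalars ℝ).hasFDerivAt.comp_hasDerivAt t (hu_deriv t ht)).neg

theorem deriv_eqOn_of_eqOn {A₂ : H →L[ℂ] H} {x₂ : H} {v v' v'' : ℝ → H}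
    (hu : IsW22Sol A x u u' u'') (hv : IsW22Sol A₂ x₂ v v' v'') (huv : EqOn u v (Ici 0)) :
    EqOn u' v' (Ici 0) := by
  have h_Ioi : EqOn u' v' (Ioi 0) := fun t ht ↦ by
    have hev : u =ᶠ[nhds t] v :=
      eventuallyEq_of_mem (isOpen_Ioi.mem_nhds ht) (huv.mono Ioi_subset_Ici_self)
    exact ((hu.2.2.1 t ht).congr_of_eventuallyEq hev.symm).unique (hv.2.2.1 t ht)
  exact h_Ioi.of_subset_closure hu.2.1 hv.2.1 Ioi_subset_Ici_self (closure_Ioi (0 : ℝ)).ge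

end IsW22Sol

theorem dirichlet_to_neumann_squared_general
    {H : Type*} [NormedAddCommGroup H] [InnerProductSpace ℂ H]
    (A : H →L[ℂ] H)
    (D : H → H)
    (hD : ∀ x : H, ∃ u u' u'' : ℝ → H, IsW22Sol A x u u' u'' ∧ D x = -(u' 0))
    (huniq : ∀ (x : H) (u₁ u₁' u₁'' u₂ u₂' u₂'' : ℝ → H),
      IsW22Sol A x u₁ u₁' u₁'' → IsW22Sol A x u₂ u₂' u₂'' →
      ∀ t ∈ Ici (0:ℝ), u₁ t = u₂ t) :
    ∀ x : H, D (D x) = A x := by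
  intro x
  obtain ⟨u, u', u'', hu, hDx⟩ := hD x
  obtain ⟨w, w', w'', hw, hDDx⟩ := hD (D x)
  have hv := hu.neg_deriv
  rw [← hDx] at hv
  have hwv := hw.deriv_eqOn_of_eqOn hv (huniq _ _ _ _ _ _ _ hw hv) (self_mem_Ici (a := (0 : ℝ)))
  rw [hDDx, hwv, neg_neg, hu.initial]

/-- if `D : H → H` is the Dirichlet-to-Neumann operator,
i.e. `D x = -u'(0)` where `u ∈ W^{2,2}((0,∞);H)` is the (unique) solution of
`u'' = A u`, `u(0) = x`, then `D² = A`. -/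
theorem dirichlet_to_neumann_squared
    {H : Type*} [NormedAddCommGroup H] [InnerProductSpace ℂ H] [CompleteSpace H]
    (A : H →L[ℂ] H) (α : ℝ) (hα0 : 0 < α) (hα1 : α ≤ 1)
    (hA : ∀ y : H, α * ‖y‖ ^ 2 ≤ (inner ℂ (A y) y : ℂ).re)
    (D : H → H)
    (hD : ∀ x : H, ∃ u u' u'' : ℝ → H, IsW22Sol A x u u' u'' ∧ D x = -(u' 0))
    (huniq : ∀ (x : H) (u₁ u₁' u₁'' u₂ u₂' u₂'' : ℝ → H),
      IsW22Sol A x u₁ u₁' u₁'' → IsW22Sol A x u₂ u₂' u₂'' →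
      ∀ t ∈ Ici (0:ℝ), u₁ t = u₂ t) :
    ∀ x : H, D (D x) = A x :=
  dirichlet_to_neumann_squared_general A D hD huniq
end
end

section
/- Let H be a Hilbert space and A an m-sectorial operator generating a C₀-semigroup satisfying ‖e^{-tA}‖ ≤ e^{-μt} for some μ > 0. For s ∈ (0,1) define U(t) = (1/Γ(s)) ∫₀^∞ e^{-t²/(4r)} r^{s-1} e^{-rA} dr. Then for every x ∈ D(A^s), the function u(t) = U(t)A^s x satisfies lim_{t↓0} (-t^{1-2s} u'(t)) = c_s A^s x in H, where c_s = 2^{1-2s}Γ(1-s)/Γ(s). -/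
/-!
Differentiating under the integral sign gives
`u'(t) = -(t/2) Γ(s)⁻¹ ∫₀^∞ e^{-t²/(4r)} r^{s-2} T(r) x dr`, the domination near a fixed `t₀`
coming from `r^{s-2} e^{-t₀²/(16r)}`, which is integrable because `s < 1`. The substitution
`r = t²τ` turns `-t^{1-2s} u'(t)` into `(2Γ(s))⁻¹ ∫₀^∞ e^{-1/(4τ)} τ^{s-2} T(t²τ) x dτ`, which by
dominated convergence and strong continuity tends to `(2Γ(s))⁻¹ (∫₀^∞ e^{-1/(4τ)} τ^{s-2} dτ) x`;
the substitution `τ = 1/y` identifies this integral as `4^{1-s} Γ(1-s)`.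
-/

open MeasureTheory Set Filter Real Topology

section InverseGammaKernel

variable {c s : ℝ}

-- The left side is the integrand of `integral_comp_rpow_Ioi` for `p = -1` and the Gamma integrand.
lemma inversion_smul_gamma_integrand {x : ℝ} (hx : 0 < x) :
    (|(-1 : ℝ)| * x ^ ((-1 : ℝ) - 1)) •
        ((x ^ (-1 : ℝ)) ^ ((1 - s) - 1) * exp (-(c * x ^ (-1 : ℝ))))
      = exp (-(c / x)) * x ^ (s - 2) := by
  rw [rpow_neg_one, inv_rpow hx.le, ← rpow_neg hx.le, smul_eq_mul, abs_neg, abs_one, one_mul,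
    div_eq_mul_inv, ← mul_assoc, ← rpow_add hx, mul_comm]
  ring_nf

lemma integral_exp_neg_div_mul_rpow (hc : 0 < c) (hs : s < 1) :
    ∫ τ in Ioi 0, exp (-(c / τ)) * τ ^ (s - 2) = c ^ (s - 1) * Gamma (1 - s) := by
  rw [← setIntegral_congr_fun measurableSet_Ioi fun x hx => inversion_smul_gamma_integrand hx,
    integral_comp_rpow_Ioi (fun y => y ^ ((1 - s) - 1) * exp (-(c * y))) (by norm_num),
    integral_rpow_mul_exp_neg_mul_Ioi (by linarith) hc, one_div, inv_rpow hc.le, ← rpow_neg hc.le]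
  ring_nf

lemma integrableOn_exp_neg_div_mul_rpow (hc : 0 < c) (hs : s < 1) :
    IntegrableOn (fun τ : ℝ => exp (-(c / τ)) * τ ^ (s - 2)) (Ioi 0) := by
  -- a non-integrable function has integral `0`
  refine .of_integral_ne_zero ?_
  rw [integral_exp_neg_div_mul_rpow hc hs]
  exact (mul_pos (rpow_pos_of_pos hc _) (Gamma_pos_of_pos (by linarith))).ne'

end InverseGammaKernel

section PoissonWeight

variable {s r : ℝ}

lemma hasDerivAt_exp_neg_sq_div_mul_rpow (hr : 0 < r) (t : ℝ) :
    HasDerivAt (fun t : ℝ => exp (-(t ^ 2) / (4 * r)) * r ^ (s - 1))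
      (-(t / 2) * exp (-(t ^ 2) / (4 * r)) * r ^ (s - 2)) t := by
  have hq : HasDerivAt (fun t : ℝ => -(t ^ 2) / (4 * r)) (-(2 * t) / (4 * r)) t :=
    ((hasDerivAt_pow 2 t).neg.div_const (4 * r)).congr_deriv (by norm_num)
  refine (hq.exp.mul_const (r ^ (s - 1))).congr_deriv ?_
  rw [show s - 1 = s - 2 + 1 by ring, rpow_add_one hr.ne']
  field_simp
  ring

lemma norm_exp_neg_sq_div_mul_rpow_le {t t₀ : ℝ} (hr : 0 < r) (ht : t ∈ Metric.ball t₀ (t₀ / 2)) :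
    ‖-(t / 2) * exp (-(t ^ 2) / (4 * r)) * r ^ (s - 2)‖
      ≤ t₀ * (exp (-(t₀ ^ 2 / 16 / r)) * r ^ (s - 2)) := by
  rw [Metric.mem_ball, Real.dist_eq, abs_lt] at ht
  have ht0 : 0 < t := by linarith
  have hexp : exp (-(t ^ 2) / (4 * r)) ≤ exp (-(t₀ ^ 2 / 16 / r)) := by
    rw [exp_le_exp, neg_div, neg_le_neg_iff, div_div,
      div_le_div_iff₀ (by positivity) (by positivity)]
    have : t₀ ^ 2 ≤ 4 * t ^ 2 := by nlinarith
    nlinarith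
  rw [norm_mul, norm_mul, norm_neg, Real.norm_of_nonneg (by positivity),
    Real.norm_of_nonneg (exp_pos _).le, Real.norm_of_nonneg (rpow_nonneg hr.le _), ← mul_assoc]
  gcongr <;> linarith

end PoissonWeight

section VectorValued

variable {E : Type*} [NormedAddCommGroup E] [NormedSpace ℝ E] {f : ℝ → E} {s : ℝ}

lemma hasDerivAt_integral_exp_neg_sq_div_mul_rpow_smul {μ C t₀ : ℝ} (hs₀ : 0 < s) (hs₁ : s < 1)
    (hμ : 0 < μ) (hf : ContinuousOn f (Ioi 0)) (hfb : ∀ r, 0 < r → ‖f r‖ ≤ C * exp (-(μ * r)))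
    (ht₀ : 0 < t₀) :
    HasDerivAt (fun t : ℝ => ∫ r in Ioi 0, (exp (-(t ^ 2) / (4 * r)) * r ^ (s - 1)) • f r)
      (∫ r in Ioi 0, (-(t₀ / 2) * exp (-(t₀ ^ 2) / (4 * r)) * r ^ (s - 2)) • f r) t₀ := by
  have hC : 0 ≤ C := nonneg_of_mul_nonneg_left ((norm_nonneg _).trans (hfb 1 one_pos)) (exp_pos _)
  have hexp : ∀ t : ℝ, ContinuousOn (fun r : ℝ => exp (-(t ^ 2) / (4 * r))) (Ioi 0) := fun t =>
    continuous_exp.comp_continuousOn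
      (continuousOn_const.div (continuousOn_const.mul continuousOn_id) fun r (hr : 0 < r) => by
        positivity)
  have hrpow : ∀ b : ℝ, ContinuousOn (fun r : ℝ => r ^ b) (Ioi 0) := fun b =>
    continuousOn_id.rpow_const fun r hr => Or.inl (ne_of_gt hr)
  have hmeas : ∀ g : ℝ → ℝ, ContinuousOn g (Ioi 0) →
      AEStronglyMeasurable (fun r => g r • f r) (volume.restrict (Ioi 0)) := fun g hg =>
    (hg.smul hf).aestronglyMeasurable measurableSet_Ioi
  refine (hasDerivAt_integral_of_dominated_loc_of_deriv_le
    (F' := fun t r => (-(t / 2) * exp (-(t ^ 2) / (4 * r)) * r ^ (s - 2)) • f r)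
    (bound := fun r => C * (t₀ * (exp (-(t₀ ^ 2 / 16 / r)) * r ^ (s - 2))))
    (Metric.ball_mem_nhds t₀ (half_pos ht₀))
    (.of_forall fun t => hmeas _ ((hexp t).mul (hrpow _)))
    ?_ (hmeas _ ((continuousOn_const.mul (hexp t₀)).mul (hrpow _))) ?_
    (((integrableOn_exp_neg_div_mul_rpow (by positivity) hs₁).const_mul t₀).const_mul C)
    ?_).2
  · refine Integrable.mono' ((integrableOn_rpow_mul_exp_neg_mul_rpow (p := 1) (s := s - 1)
      (by linarith) one_pos hμ).const_mul C) (hmeas _ ((hexp t₀).mul (hrpow _))) ?_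
    filter_upwards [ae_restrict_mem measurableSet_Ioi] with r (hr : 0 < r)
    rw [norm_smul, Pi.mul_apply, rpow_one, neg_mul, Real.norm_of_nonneg (by positivity),
      mul_left_comm]
    have hexp_le : exp (-(t₀ ^ 2) / (4 * r)) ≤ 1 := exp_le_one_iff.2 (by
      rw [neg_div]; exact neg_nonpos.2 (by positivity))
    exact mul_le_mul (mul_le_of_le_one_left (rpow_nonneg hr.le _) hexp_le) (hfb r hr)
      (norm_nonneg _) (rpow_nonneg hr.le _)
  · filter_upwards [ae_restrict_mem measurableSet_Ioi] with r (hr : 0 < r) t ht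
    rw [norm_smul, mul_comm]
    exact mul_le_mul
      ((hfb r hr).trans (mul_le_of_le_one_right hC (exp_le_one_iff.2 (by nlinarith))))
      (norm_exp_neg_sq_div_mul_rpow_le hr ht) (norm_nonneg _) hC
  · filter_upwards [ae_restrict_mem measurableSet_Ioi] with r (hr : 0 < r) t _
    exact (hasDerivAt_exp_neg_sq_div_mul_rpow hr t).smul_const (f r)

lemma neg_rpow_smul_integral_eq_integral_comp_sq_mul {t : ℝ} (ht : 0 < t) :
    -(t ^ (1 - 2 * s) • ∫ r in Ioi 0, (-(t / 2) * exp (-(t ^ 2) / (4 * r)) * r ^ (s - 2)) • f r)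
      = (2 : ℝ)⁻¹ • ∫ τ in Ioi 0, (exp (-(1 / 4 / τ)) * τ ^ (s - 2)) • f (t ^ 2 * τ) := by
  have ht2 : 0 < t ^ 2 := by positivity
  have hpow : t ^ (1 - 2 * s) * (t ^ 2) ^ (s - 2) * t ^ 3 = 1 := by
    rw [← rpow_natCast, ← rpow_natCast, ← rpow_mul ht.le, ← rpow_add ht, ← rpow_add ht]
    convert rpow_zero t using 2
    push_cast
    ring
  rw [← neg_smul, ← integral_smul, ← mul_zero (t ^ 2), ← integral_comp_mul_left_Ioi' _ _ ht2,
    mul_zero, ← integral_smul, ← integral_smul]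
  refine setIntegral_congr_fun measurableSet_Ioi fun τ (hτ : 0 < τ) => ?_
  simp only [smul_smul]
  congr 1
  rw [mul_rpow ht2.le hτ.le, show -(t ^ 2) / (4 * (t ^ 2 * τ)) = -(1 / 4 / τ) by field_simp]
  linear_combination ((1 : ℝ) / 2 * exp (-(1 / 4 / τ)) * τ ^ (s - 2)) * hpow

variable [CompleteSpace E]

lemma tendsto_integral_smul_comp_mul_nhdsGT_zero {k : ℝ → ℝ} {C : ℝ} (hk : IntegrableOn k (Ioi 0))
    (hf : ContinuousOn f (Ici 0)) (hfb : ∀ r, 0 ≤ r → ‖f r‖ ≤ C) :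
    Tendsto (fun t => ∫ τ in Ioi 0, k τ • f (t * τ)) (𝓝[>] 0)
      (𝓝 ((∫ τ in Ioi 0, k τ) • f 0)) := by
  rw [← integral_smul_const]
  refine tendsto_integral_filter_of_dominated_convergence (fun τ => ‖k τ‖ * C) ?_ ?_
    (hk.norm.mul_const C) ?_
  · filter_upwards [self_mem_nhdsWithin] with t (ht : 0 < t)
    refine hk.aestronglyMeasurable.smul
      ((hf.comp (continuousOn_const.mul continuousOn_id) fun τ (hτ : 0 < τ) => ?_)
        |>.aestronglyMeasurable measurableSet_Ioi)
    exact mem_Ici.2 (mul_nonneg ht.le hτ.le)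
  · filter_upwards [self_mem_nhdsWithin] with t (ht : 0 < t)
    filter_upwards [ae_restrict_mem measurableSet_Ioi] with τ (hτ : 0 < τ)
    rw [norm_smul]
    exact mul_le_mul_of_nonneg_left (hfb _ (by positivity)) (norm_nonneg _)
  · filter_upwards [ae_restrict_mem measurableSet_Ioi] with τ (hτ : 0 < τ)
    have hmul : Tendsto (fun t : ℝ => t * τ) (𝓝[>] 0) (𝓝[Ici 0] 0) := by
      refine tendsto_nhdsWithin_of_tendsto_nhds_of_eventually_within _ ?_ ?_
      · exact ((continuous_mul_const τ).tendsto' 0 0 (zero_mul τ)).mono_left nhdsWithin_le_nhds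
      · filter_upwards [self_mem_nhdsWithin] with t (ht : 0 < t)
        exact mem_Ici.2 (by positivity)
    exact ((hf 0 self_mem_Ici).tendsto.comp hmul).const_smul (k τ)

end VectorValued

lemma tendsto_sq_nhdsGT_zero : Tendsto (fun t : ℝ => t ^ 2) (𝓝[>] 0) (𝓝[>] 0) :=
  tendsto_nhdsWithin_of_tendsto_nhds_of_eventually_within _
    (((continuous_pow 2).tendsto' 0 0 (by norm_num)).mono_left nhdsWithin_le_nhds)
    (eventually_mem_nhdsWithin.mono fun t (ht : 0 < t) => pow_pos ht 2)

lemma inv_two_mul_one_div_four_rpow (s : ℝ) : (2 : ℝ)⁻¹ * (1 / 4) ^ (s - 1) = 2 ^ (1 - 2 * s) := by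
  rw [one_div, inv_rpow (by norm_num), ← rpow_neg (by norm_num),
    show (4 : ℝ) = 2 ^ (2 : ℝ) by norm_num, ← rpow_mul (by norm_num), ← rpow_neg_one, ← rpow_add (by norm_num)]
  ring_nf

theorem normal_derivative_of_poisson_formula_general
    {H : Type*} [NormedAddCommGroup H] [InnerProductSpace ℂ H] [CompleteSpace H]
    (μ : ℝ) (hμ : 0 < μ)
    (T : ℝ → H →L[ℂ] H)
    (hT0 : T 0 = ContinuousLinearMap.id ℂ H)
    (hTc : ∀ x : H, ContinuousOn (fun r => T r x) (Ici 0))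
    (hTb : ∀ r : ℝ, 0 ≤ r → ‖T r‖ ≤ Real.exp (-(μ * r)))
    (s : ℝ) (hs : s ∈ Ioo (0:ℝ) 1) (Asx : H) :
    ∃ u' : ℝ → H,
      (∀ t ∈ Ioi (0:ℝ), HasDerivAt
        (fun t : ℝ => (Real.Gamma s)⁻¹ •
          ∫ r in Ioi (0:ℝ), (Real.exp (-(t ^ 2) / (4 * r)) * r ^ (s - 1)) • T r Asx)
        (u' t) t) ∧
      Tendsto (fun t : ℝ => -(t ^ (1 - 2*s) • u' t)) (nhdsWithin 0 (Ioi 0))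
        (nhds ((2 ^ (1 - 2*s) * Real.Gamma (1 - s) / Real.Gamma s) • Asx)) := by
  obtain ⟨hs₀, hs₁⟩ := hs
  have horbit : ∀ r, 0 ≤ r → ‖T r Asx‖ ≤ ‖Asx‖ * exp (-(μ * r)) := fun r hr =>
    ((T r).le_opNorm Asx).trans (by rw [mul_comm]; gcongr; exact hTb r hr)
  have hcontr : ∀ r, 0 ≤ r → ‖T r Asx‖ ≤ ‖Asx‖ := fun r hr =>
    (horbit r hr).trans (mul_le_of_le_one_right (norm_nonneg _) (exp_le_one_iff.2 (by nlinarith)))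
  refine ⟨fun t => (Gamma s)⁻¹ •
    ∫ r in Ioi 0, (-(t / 2) * exp (-(t ^ 2) / (4 * r)) * r ^ (s - 2)) • T r Asx, fun t ht => ?_, ?_⟩
  · exact (hasDerivAt_integral_exp_neg_sq_div_mul_rpow_smul hs₀ hs₁ hμ
      ((hTc Asx).mono Ioi_subset_Ici_self) (fun r hr => horbit r hr.le) ht).const_smul _
  have hlim := (tendsto_integral_smul_comp_mul_nhdsGT_zero
    (integrableOn_exp_neg_div_mul_rpow (by norm_num : (0 : ℝ) < 1 / 4) hs₁) (hTc Asx)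
    hcontr).comp tendsto_sq_nhdsGT_zero
  have hconst : (Gamma s)⁻¹ • (2 : ℝ)⁻¹ • (((1 / 4) ^ (s - 1) * Gamma (1 - s)) • Asx)
      = (2 ^ (1 - 2 * s) * Gamma (1 - s) / Gamma s) • Asx := by
    rw [smul_smul, smul_smul, ← inv_two_mul_one_div_four_rpow]
    ring_nf
  rw [integral_exp_neg_div_mul_rpow (by norm_num) hs₁, hT0, ContinuousLinearMap.id_apply] at hlim
  rw [← hconst]
  refine ((hlim.const_smul (2 : ℝ)⁻¹).const_smul (Gamma s)⁻¹).congr' ?_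
  filter_upwards [self_mem_nhdsWithin] with t (ht : 0 < t)
  rw [smul_comm (t ^ (1 - 2 * s)) (Gamma s)⁻¹, ← smul_neg,
    neg_rpow_smul_integral_eq_integral_comp_sq_mul ht]
  rfl

/-- let `(T r)_{r≥0} = (e^{-rA})_{r≥0}` be a strongly continuous
semigroup of operators on a Hilbert space `H` with `‖T r‖ ≤ e^{-μ r}`, and let
`s ∈ (0,1)`.  For `x ∈ D(A^s)` put `Asx = A^s x` and
`u(t) = U(t) Asx = Γ(s)⁻¹ ∫₀^∞ e^{-t²/(4r)} r^{s-1} T r Asx dr`.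
Then `u` is differentiable on `(0,∞)` and
`lim_{t↓0} (-t^{1-2s} u'(t)) = c_s Asx` in `H`, with
`c_s = 2^{1-2s} Γ(1-s)/Γ(s)`. -/
theorem normal_derivative_of_poisson_formula
    {H : Type*} [NormedAddCommGroup H] [InnerProductSpace ℂ H] [CompleteSpace H]
    (μ : ℝ) (hμ : 0 < μ)
    (T : ℝ → H →L[ℂ] H)
    (hT0 : T 0 = ContinuousLinearMap.id ℂ H)
    (hTsg : ∀ a b : ℝ, 0 ≤ a → 0 ≤ b → T (a + b) = (T a).comp (T b))
    (hTc : ∀ x : H, ContinuousOn (fun r => T r x) (Ici 0))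
    (hTb : ∀ r : ℝ, 0 ≤ r → ‖T r‖ ≤ Real.exp (-(μ * r)))
    (s : ℝ) (hs : s ∈ Ioo (0:ℝ) 1) (Asx : H) :
    ∃ u' : ℝ → H,
      (∀ t ∈ Ioi (0:ℝ), HasDerivAt
        (fun t : ℝ => (Real.Gamma s)⁻¹ •
          ∫ r in Ioi (0:ℝ), (Real.exp (-(t ^ 2) / (4 * r)) * r ^ (s - 1)) • T r Asx)
        (u' t) t) ∧
      Tendsto (fun t : ℝ => -(t ^ (1 - 2*s) • u' t)) (nhdsWithin 0 (Ioi 0))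
        (nhds ((2 ^ (1 - 2*s) * Real.Gamma (1 - s) / Real.Gamma s) • Asx)) :=
  normal_derivative_of_poisson_formula_general μ hμ T hT0 hTc hTb s hs Asx
end

section
/- Let H be a Hilbert space and (e^{-tA})_{t≥0} a semigroup with ‖e^{-tA}‖_{L(H)} ≤ e^{-μt} for all t ≥ 0 and some μ > 0. For s ∈ (0,1) let U(t) = (1/Γ(s))∫₀^∞ e^{-t²/(4r)} r^{s-1} e^{-rA} dr. Then there exist δ ∈ (0,μ) and M ≥ 0 such that ‖U(t)‖_{L(H)} ≤ M e^{-δt} for all t > 0; explicitly ‖U(t)‖ ≤ μ^{-s} e^{-t/4} + (2/μ)^s e^{-μt/2}. -/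
/-! Bound the integrand by `r^(s-1) e^(-t²/(4r)) e^(-μr)` and split at `r = t`: for `r ≤ t` the
Gaussian factor is at most `e^(-t/4)`, while for `r > t` one has `e^(-μr) ≤ e^(-μt/2) e^(-μr/2)`.
The two resulting Gamma integrals are `Γ(s) μ^(-s)` and `Γ(s) (2/μ)^s`, and exponential decay
follows with `δ = min (1/4) (μ/2)`. -/

open MeasureTheory Set Filter

noncomputable section

lemma integrableOn_rpow_sub_one_mul_exp_neg_mul_Ioi {s b : ℝ} (hs : 0 < s) (hb : 0 < b) :
    IntegrableOn (fun r : ℝ => r ^ (s - 1) * Real.exp (-(b * r))) (Ioi 0) := by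
  simpa [Real.rpow_one, neg_mul] using
    integrableOn_rpow_mul_exp_neg_mul_rpow (s := s - 1) (by linarith) one_pos hb

lemma exp_neg_sq_div_mul_exp_neg_mul_le {t r μ : ℝ} (hr : 0 < r) (hμ : 0 ≤ μ) :
    Real.exp (-(t ^ 2) / (4 * r)) * Real.exp (-(μ * r)) ≤
      Real.exp (-(t / 4)) * Real.exp (-(μ * r)) +
        Real.exp (-(μ * t / 2)) * Real.exp (-(μ / 2 * r)) := by
  rcases le_or_gt r t with hrt | htr
  · have hkernel : Real.exp (-(t ^ 2) / (4 * r)) ≤ Real.exp (-(t / 4)) := by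
      rw [Real.exp_le_exp, neg_div, neg_le_neg_iff, div_le_div_iff₀ (by norm_num) (by positivity)]
      nlinarith
    calc Real.exp (-(t ^ 2) / (4 * r)) * Real.exp (-(μ * r))
        ≤ Real.exp (-(t / 4)) * Real.exp (-(μ * r)) := by gcongr
      _ ≤ _ := le_add_of_nonneg_right (by positivity)
  · have hkernel : Real.exp (-(t ^ 2) / (4 * r)) ≤ 1 :=
      Real.exp_le_one_iff.mpr (div_nonpos_of_nonpos_of_nonneg (by nlinarith) (by positivity))
    have hsplit : Real.exp (-(μ * r)) ≤ Real.exp (-(μ * t / 2)) * Real.exp (-(μ / 2 * r)) := by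
      rw [← Real.exp_add, Real.exp_le_exp]
      nlinarith
    calc Real.exp (-(t ^ 2) / (4 * r)) * Real.exp (-(μ * r))
        ≤ Real.exp (-(μ * t / 2)) * Real.exp (-(μ / 2 * r)) :=
          (mul_le_of_le_one_left (Real.exp_nonneg _) hkernel).trans hsplit
      _ ≤ _ := le_add_of_nonneg_left (by positivity)

lemma mul_exp_neg_add_mul_exp_neg_le {a b α β t : ℝ} (ha : 0 ≤ a) (hb : 0 ≤ b) (ht : 0 ≤ t) :
    a * Real.exp (-(α * t)) + b * Real.exp (-(β * t)) ≤
      (a + b) * Real.exp (-(min α β * t)) := by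
  calc a * Real.exp (-(α * t)) + b * Real.exp (-(β * t))
      ≤ a * Real.exp (-(min α β * t)) + b * Real.exp (-(min α β * t)) := by
        gcongr
        · exact min_le_left α β
        · exact min_le_right α β
    _ = (a + b) * Real.exp (-(min α β * t)) := by ring

section PoissonSubordination

variable {E : Type*} [NormedAddCommGroup E] [NormedSpace ℝ E]

def poissonSubordination (s t : ℝ) (T : ℝ → E) : E :=
  (Real.Gamma s)⁻¹ • ∫ r in Ioi (0:ℝ), (Real.exp (-(t ^ 2) / (4 * r)) * r ^ (s - 1)) • T r

lemma norm_poissonSubordination_le {μ s : ℝ} {T : ℝ → E} (hμ : 0 < μ) (hs : 0 < s)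
    (hT : ∀ r : ℝ, 0 < r → ‖T r‖ ≤ Real.exp (-(μ * r))) (t : ℝ) :
    ‖poissonSubordination s t T‖ ≤
      μ ^ (-s) * Real.exp (-(t / 4)) + (2 / μ) ^ s * Real.exp (-(μ * t / 2)) := by
  set g : ℝ → ℝ := fun r =>
    Real.exp (-(t / 4)) * (r ^ (s - 1) * Real.exp (-(μ * r))) +
      Real.exp (-(μ * t / 2)) * (r ^ (s - 1) * Real.exp (-(μ / 2 * r)))
  have hint₁ := (integrableOn_rpow_sub_one_mul_exp_neg_mul_Ioi hs hμ).const_mul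
    (Real.exp (-(t / 4)))
  have hint₂ := (integrableOn_rpow_sub_one_mul_exp_neg_mul_Ioi hs (half_pos hμ)).const_mul
    (Real.exp (-(μ * t / 2)))
  have hbound : ∀ r ∈ Ioi (0:ℝ),
      ‖(Real.exp (-(t ^ 2) / (4 * r)) * r ^ (s - 1)) • T r‖ ≤ g r := by
    intro r (hr : 0 < r)
    rw [norm_smul, Real.norm_of_nonneg (by positivity)]
    calc Real.exp (-(t ^ 2) / (4 * r)) * r ^ (s - 1) * ‖T r‖
        ≤ Real.exp (-(t ^ 2) / (4 * r)) * r ^ (s - 1) * Real.exp (-(μ * r)) := by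
          gcongr
          exact hT r hr
      _ = r ^ (s - 1) * (Real.exp (-(t ^ 2) / (4 * r)) * Real.exp (-(μ * r))) := by ring
      _ ≤ r ^ (s - 1) * (Real.exp (-(t / 4)) * Real.exp (-(μ * r)) +
            Real.exp (-(μ * t / 2)) * Real.exp (-(μ / 2 * r))) := by
          gcongr
          exact exp_neg_sq_div_mul_exp_neg_mul_le hr hμ.le
      _ = g r := by ring
  have hnorm := norm_integral_le_of_norm_le (hint₁.add hint₂)
    ((ae_restrict_iff' measurableSet_Ioi).mpr (Eventually.of_forall hbound))
  have hg : ∫ r in Ioi (0:ℝ), g r =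
      Real.Gamma s * (μ ^ (-s) * Real.exp (-(t / 4)) + (2 / μ) ^ s * Real.exp (-(μ * t / 2))) := by
    rw [integral_add hint₁ hint₂, integral_const_mul, integral_const_mul,
      Real.integral_rpow_mul_exp_neg_mul_Ioi hs hμ,
      Real.integral_rpow_mul_exp_neg_mul_Ioi hs (half_pos hμ), one_div_div, one_div,
      Real.inv_rpow hμ.le, ← Real.rpow_neg hμ.le]
    ring
  have hΓ : 0 < Real.Gamma s := Real.Gamma_pos_of_pos hs
  rw [poissonSubordination, norm_smul, Real.norm_of_nonneg (inv_nonneg.mpr hΓ.le),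
    inv_mul_le_iff₀ hΓ, ← hg]
  exact hnorm

end PoissonSubordination

theorem poisson_operator_decay_general
    {H : Type*} [NormedAddCommGroup H] [InnerProductSpace ℂ H]
    (μ : ℝ) (hμ : 0 < μ)
    (T : ℝ → H →L[ℂ] H)
    (hTb : ∀ r : ℝ, 0 ≤ r → ‖T r‖ ≤ Real.exp (-(μ * r)))
    (s : ℝ) (hs : s ∈ Ioo (0:ℝ) 1) :
    (∀ t : ℝ, 0 < t →
      ‖(Real.Gamma s)⁻¹ •
          ∫ r in Ioi (0:ℝ), (Real.exp (-(t ^ 2) / (4 * r)) * r ^ (s - 1)) • T r‖ ≤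
        μ ^ (-s) * Real.exp (-(t / 4)) + (2 / μ) ^ s * Real.exp (-(μ * t / 2))) ∧
    (∃ δ : ℝ, δ ∈ Ioo 0 μ ∧ ∃ M : ℝ, 0 ≤ M ∧ ∀ t : ℝ, 0 < t →
      ‖(Real.Gamma s)⁻¹ •
          ∫ r in Ioi (0:ℝ), (Real.exp (-(t ^ 2) / (4 * r)) * r ^ (s - 1)) • T r‖ ≤
        M * Real.exp (-(δ * t))) := by
  have hbound (t : ℝ) : ‖poissonSubordination s t T‖ ≤
      μ ^ (-s) * Real.exp (-(t / 4)) + (2 / μ) ^ s * Real.exp (-(μ * t / 2)) :=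
    norm_poissonSubordination_le hμ hs.1 (fun r hr => hTb r hr.le) t
  refine ⟨fun t _ => hbound t, min (1 / 4) (μ / 2),
    ⟨by positivity, (min_le_right _ _).trans_lt (half_lt_self hμ)⟩,
    μ ^ (-s) + (2 / μ) ^ s, by positivity, fun t ht => (hbound t).trans ?_⟩
  have := mul_exp_neg_add_mul_exp_neg_le (α := 1 / 4) (β := μ / 2)
    (by positivity : 0 ≤ μ ^ (-s)) (by positivity : 0 ≤ (2 / μ) ^ s) ht.le
  rwa [one_div_mul_eq_div, div_mul_eq_mul_div] at this

/-- if `‖T r‖ ≤ e^{-μ r}` for all `r ≥ 0` and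
`U(t) = Γ(s)⁻¹ ∫₀^∞ e^{-t²/(4r)} r^{s-1} T r dr`, then
`‖U(t)‖ ≤ μ^{-s} e^{-t/4} + (2/μ)^s e^{-μt/2}` for all `t > 0`, and hence
there are `δ ∈ (0,μ)` and `M ≥ 0` with `‖U(t)‖ ≤ M e^{-δ t}` for all `t > 0`. -/
theorem poisson_operator_decay
    {H : Type*} [NormedAddCommGroup H] [InnerProductSpace ℂ H] [CompleteSpace H]
    (μ : ℝ) (hμ : 0 < μ)
    (T : ℝ → H →L[ℂ] H)
    (hTc : ContinuousOn T (Ioi 0))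
    (hTb : ∀ r : ℝ, 0 ≤ r → ‖T r‖ ≤ Real.exp (-(μ * r)))
    (s : ℝ) (hs : s ∈ Ioo (0:ℝ) 1) :
    (∀ t : ℝ, 0 < t →
      ‖(Real.Gamma s)⁻¹ •
          ∫ r in Ioi (0:ℝ), (Real.exp (-(t ^ 2) / (4 * r)) * r ^ (s - 1)) • T r‖ ≤
        μ ^ (-s) * Real.exp (-(t / 4)) + (2 / μ) ^ s * Real.exp (-(μ * t / 2))) ∧
    (∃ δ : ℝ, δ ∈ Ioo 0 μ ∧ ∃ M : ℝ, 0 ≤ M ∧ ∀ t : ℝ, 0 < t →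
      ‖(Real.Gamma s)⁻¹ •
          ∫ r in Ioi (0:ℝ), (Real.exp (-(t ^ 2) / (4 * r)) * r ^ (s - 1)) • T r‖ ≤
        M * Real.exp (-(δ * t))) :=
  poisson_operator_decay_general μ hμ T hTb s hs
end
end
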